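/- For a symmetric sequence B of R-modules and a finite-rank free R-module V, there is a natural isomorphism (σB)(V) ≅ B(V) ⊗ V of R-modules, where (σB)(n) = Ind_{S_{n-1}}^{S_n} B(n-1) and B(V) = ⊕_n B(n) ⊗_{S_n} V^{⊗n} is the Schur functor. -/

import Mathlib

/-!
For any `S_{n+1}`-module `T`, `Ind_{S_n}^{S_{n+1}} B ⊗_{S_{n+1}} T = (B ⊗_{S_n} R[S_{n+1}]) ⊗_{S_{n+1}} T`
collapses to `B ⊗_{S_n} T`, with `T` restricted along the stabiliser of the last point. For
`T = V^{⊗(n+1)} ≅ V^{⊗n} ⊗ V` this restricted action only moves the first factor, so the last `V`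
comes out of the coinvariants: `(σB)(n+1) ⊗_{S_{n+1}} V^{⊗(n+1)} ≅ (B(n) ⊗_{S_n} V^{⊗n}) ⊗ V`.
Since `(σB)(0) = 0`, summing over `n` and distributing `⊗ V` over the direct sum gives the result.
-/

open TensorProduct PiTensorProduct DirectSum

universe u

variable (R : Type u) [CommRing R]

section Coinv

variable (G : Type*) [Group G]
variable (B : Type u) [AddCommGroup B] [Module R B] (ρ : G → B →ₗ[R] B)
variable (T : Type u) [AddCommGroup T] [Module R T] (π : G → T →ₗ[R] T)

/-- The relations defining the coinvariants tensor product `B ⊗_G T` of a right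
`G`-module `B` (action `ρ`) and a left `G`-module `T` (action `π`). -/
def coinvRel : Submodule R (B ⊗[R] T) :=
  Submodule.span R
    {x | ∃ (b : B) (t : T) (g : G), x = (ρ g b) ⊗ₜ[R] t - b ⊗ₜ[R] (π g t)}

/-- The coinvariants tensor product `B ⊗_G T`. -/
abbrev Coinv : Type u := (B ⊗[R] T) ⧸ coinvRel R G B ρ T π

end Coinv

/-- The (left) action of a permutation on the `n`-th tensor power of `V`, permuting the
tensor factors. -/
noncomputable def permAct (V : Type u) [AddCommGroup V] [Module R V] (n : ℕ)
    (g : Equiv.Perm (Fin n)) : (⨂[R] _ : Fin n, V) →ₗ[R] (⨂[R] _ : Fin n, V) :=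
  (PiTensorProduct.reindex R (fun _ : Fin n => V) g).toLinearMap

/-- The Schur functor of a symmetric sequence `{Mn n}` (with right `S_n`-actions `act n`):
`B(V) = ⊕ₙ B(n) ⊗_{Sₙ} V^{⊗n}`. -/
noncomputable abbrev Schur (Mn : ℕ → Type u) [∀ n, AddCommGroup (Mn n)]
    [∀ n, Module R (Mn n)] (act : ∀ n, Equiv.Perm (Fin n) → Mn n →ₗ[R] Mn n)
    (V : Type u) [AddCommGroup V] [Module R V] : Type u :=
  ⨁ n : ℕ,
    Coinv R (Equiv.Perm (Fin n)) (Mn n) (act n) (⨂[R] _ : Fin n, V) (permAct R V n)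

section Emb

/-- The standard embedding `S_n → S_{n+1}` (stabilizer of the last point). -/
def embHom (n : ℕ) : Equiv.Perm (Fin n) →* Equiv.Perm (Fin (n + 1)) where
  toFun g := Equiv.permCongr finSumFinEquiv (Equiv.sumCongr g (Equiv.refl (Fin 1)))
  map_one' := by
    ext x
    simp [Equiv.permCongr_apply]
  map_mul' g h := by
    ext x
    simp only [Equiv.permCongr_apply, Equiv.Perm.mul_apply, Equiv.symm_apply_apply]
    generalize finSumFinEquiv.symm x = y
    cases y <;> simp [Equiv.Perm.mul_apply]

end Emb

section Ind

variable (n : ℕ) (B : Type u) [AddCommGroup B] [Module R B]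
variable (ρ : Equiv.Perm (Fin n) → B →ₗ[R] B)

/-- Relations for the induced module `Ind_{S_n}^{S_{n+1}} B` of a right `S_n`-module
(the group algebra `R[S_{n+1}]` being realized as the function module
`S_{n+1} → R`, with basis the indicator functions `Pi.single g 1`). -/
def indRel : Submodule R (B ⊗[R] (Equiv.Perm (Fin (n + 1)) → R)) :=
  Submodule.span R
    {x | ∃ (b : B) (g : Equiv.Perm (Fin (n + 1))) (h : Equiv.Perm (Fin n)),
      x = (ρ h b) ⊗ₜ[R] Pi.single g (1 : R) -
        b ⊗ₜ[R] Pi.single (embHom n h * g) (1 : R)}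

/-- The induced module `Ind_{S_n}^{S_{n+1}} B = B ⊗_{R[S_n]} R[S_{n+1}]` of a right
`S_n`-module `B`. -/
abbrev Ind : Type u := (B ⊗[R] (Equiv.Perm (Fin (n + 1)) → R)) ⧸ indRel R n B ρ

/-- Right translation by `g₀` on the group algebra `R[S_{n+1}]`. -/
noncomputable def shift (g₀ : Equiv.Perm (Fin (n + 1))) :
    (Equiv.Perm (Fin (n + 1)) → R) →ₗ[R] (Equiv.Perm (Fin (n + 1)) → R) :=
  LinearMap.funLeft R R (fun x => x * g₀⁻¹)

lemma shift_single (g g₀ : Equiv.Perm (Fin (n + 1))) :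
    shift R n g₀ (Pi.single g (1 : R)) = Pi.single (g * g₀) (1 : R) := by
  funext x
  simp [shift, LinearMap.funLeft_apply, Pi.single_apply, mul_inv_eq_iff_eq_mul]

/-- The right `S_{n+1}`-action on `Ind_{S_n}^{S_{n+1}} B`, induced by right translation. -/
noncomputable def indAct (g₀ : Equiv.Perm (Fin (n + 1))) :
    Ind R n B ρ →ₗ[R] Ind R n B ρ :=
  Submodule.mapQ _ _ (TensorProduct.map LinearMap.id (shift R n g₀)) (by
    refine Submodule.span_le.2 ?_
    rintro x ⟨b, g, h, rfl⟩
    simp only [SetLike.mem_coe, Submodule.mem_comap, map_sub, TensorProduct.map_tmul,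
      LinearMap.id_coe, id_eq, shift_single]
    exact Submodule.subset_span ⟨b, g * g₀, h, by rw [mul_assoc]⟩)

end Ind

section Sigma

variable (Mn : ℕ → Type u) [∀ n, AddCommGroup (Mn n)] [∀ n, Module R (Mn n)]
variable (act : ∀ n, Equiv.Perm (Fin n) → Mn n →ₗ[R] Mn n)

/-- The symmetric sequence `σB`: `(σB)(0) = 0` and `(σB)(n+1) = Ind_{S_n}^{S_{n+1}} B(n)`. -/
noncomputable def sigmaM : ℕ → Type u
  | 0 => (⊥ : Submodule R R)
  | (n + 1) => Ind R n (Mn n) (act n)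

noncomputable instance sigmaM.addCommGroup : ∀ k, AddCommGroup (sigmaM R Mn act k)
  | 0 => inferInstanceAs (AddCommGroup (⊥ : Submodule R R))
  | (n + 1) => inferInstanceAs (AddCommGroup (Ind R n (Mn n) (act n)))

noncomputable instance sigmaM.module : ∀ k, Module R (sigmaM R Mn act k)
  | 0 => inferInstanceAs (Module R (⊥ : Submodule R R))
  | (n + 1) => inferInstanceAs (Module R (Ind R n (Mn n) (act n)))

/-- The right `S_k`-actions on `σB`. -/
noncomputable def sigmaAct :
    ∀ k, Equiv.Perm (Fin k) → sigmaM R Mn act k →ₗ[R] sigmaM R Mn act k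
  | 0 => fun _ => LinearMap.id
  | (n + 1) => fun g => indAct R n (Mn n) (act n) g

end Sigma

namespace Coinv

variable {R} {G : Type*}
variable {B : Type u} [AddCommGroup B] [Module R B] {ρ : G → B →ₗ[R] B}
variable {T : Type u} [AddCommGroup T] [Module R T] {π : G → T →ₗ[R] T}
variable {M : Type*} [AddCommGroup M] [Module R M]

noncomputable def mk : B →ₗ[R] T →ₗ[R] Coinv R G B ρ T π :=
  (TensorProduct.mk R B T).compr₂ (coinvRel R G B ρ T π).mkQ

theorem mk_act (g : G) (b : B) (t : T) :
    (mk (ρ g b) t : Coinv R G B ρ T π) = mk b (π g t) :=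
  (Submodule.Quotient.eq _).2 (Submodule.subset_span ⟨b, t, g, rfl⟩)

theorem mk_comp_act (g : G) (b : B) :
    (mk (ρ g b) : T →ₗ[R] Coinv R G B ρ T π) = mk b ∘ₗ π g :=
  LinearMap.ext (mk_act g b)

noncomputable def lift (f : B →ₗ[R] T →ₗ[R] M) (hf : ∀ g b t, f (ρ g b) t = f b (π g t)) :
    Coinv R G B ρ T π →ₗ[R] M :=
  (coinvRel R G B ρ T π).liftQ (TensorProduct.lift f) <| Submodule.span_le.2 <| by
    rintro _ ⟨b, t, g, rfl⟩
    simp [hf]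

@[simp]
theorem lift_mk (f : B →ₗ[R] T →ₗ[R] M) (hf : ∀ g b t, f (ρ g b) t = f b (π g t))
    (b : B) (t : T) : lift f hf (mk b t) = f b t :=
  TensorProduct.lift.tmul b t

theorem hom_ext {f f' : Coinv R G B ρ T π →ₗ[R] M} (h : ∀ b t, f (mk b t) = f' (mk b t)) :
    f = f' :=
  Submodule.linearMap_qext _ (TensorProduct.ext' h)

theorem tensor_hom_ext {V : Type*} [AddCommGroup V] [Module R V]
    {f f' : Coinv R G B ρ T π ⊗[R] V →ₗ[R] M}
    (h : ∀ b t v, f (mk b t ⊗ₜ v) = f' (mk b t ⊗ₜ v)) : f = f' :=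
  TensorProduct.ext <| hom_ext fun b t => LinearMap.ext (h b t)

instance instSubsingleton [Subsingleton B] : Subsingleton (Coinv R G B ρ T π) :=
  (Submodule.Quotient.mk_surjective _).subsingleton

end Coinv

namespace Ind

variable {R} {n : ℕ} {B : Type u} [AddCommGroup B] [Module R B]
variable {ρ : Equiv.Perm (Fin n) → B →ₗ[R] B}
variable {M : Type*} [AddCommGroup M] [Module R M]

noncomputable def mk : B →ₗ[R] (Equiv.Perm (Fin (n + 1)) → R) →ₗ[R] Ind R n B ρ :=
  (TensorProduct.mk R _ _).compr₂ (indRel R n B ρ).mkQ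

theorem mk_act (h : Equiv.Perm (Fin n)) (b : B) (g : Equiv.Perm (Fin (n + 1))) :
    (mk (ρ h b) (Pi.single g 1) : Ind R n B ρ) = mk b (Pi.single (embHom n h * g) 1) :=
  (Submodule.Quotient.eq _).2 (Submodule.subset_span ⟨b, g, h, rfl⟩)

theorem indAct_mk_single (g₀ g : Equiv.Perm (Fin (n + 1))) (b : B) :
    indAct R n B ρ g₀ (mk b (Pi.single g 1)) = mk b (Pi.single (g * g₀) 1) :=
  congrArg Submodule.Quotient.mk <| by
    rw [TensorProduct.mk_apply, TensorProduct.map_tmul, shift_single, LinearMap.id_apply]; rfl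

noncomputable def lift (f : B →ₗ[R] (Equiv.Perm (Fin (n + 1)) → R) →ₗ[R] M)
    (hf : ∀ h b g, f (ρ h b) (Pi.single g 1) = f b (Pi.single (embHom n h * g) 1)) :
    Ind R n B ρ →ₗ[R] M :=
  (indRel R n B ρ).liftQ (TensorProduct.lift f) <| Submodule.span_le.2 <| by
    rintro _ ⟨b, g, h, rfl⟩
    simp [hf]

@[simp]
theorem lift_mk (f : B →ₗ[R] (Equiv.Perm (Fin (n + 1)) → R) →ₗ[R] M)
    (hf : ∀ h b g, f (ρ h b) (Pi.single g 1) = f b (Pi.single (embHom n h * g) 1))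
    (b : B) (φ : Equiv.Perm (Fin (n + 1)) → R) : lift f hf (mk b φ) = f b φ :=
  TensorProduct.lift.tmul b φ

theorem hom_ext {f f' : Ind R n B ρ →ₗ[R] M}
    (h : ∀ b g, f (mk b (Pi.single g 1)) = f' (mk b (Pi.single g 1))) : f = f' := by
  refine Submodule.linearMap_qext _ (TensorProduct.ext ?_)
  refine LinearMap.ext fun b => LinearMap.pi_ext fun g r => ?_
  have hsingle : (Pi.single g r : Equiv.Perm (Fin (n + 1)) → R) = r • Pi.single g 1 := by
    rw [← Pi.single_smul', smul_eq_mul, mul_one]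
  simpa [hsingle, mk] using congrArg (r • ·) (h b g)

end Ind

section InducedCoinv

variable {R} {n : ℕ} {B : Type u} [AddCommGroup B] [Module R B]
variable (ρ : Equiv.Perm (Fin n) → B →ₗ[R] B)
variable {T : Type u} [AddCommGroup T] [Module R T] (π : Equiv.Perm (Fin (n + 1)) → T →ₗ[R] T)

local notation "Res" => Coinv R (Equiv.Perm (Fin n)) B ρ T (fun h => π (embHom n h))
local notation "IndCoinv" =>
  Coinv R (Equiv.Perm (Fin (n + 1))) (Ind R n B ρ) (indAct R n B ρ) T π

variable {ρ π} in
theorem indCoinv_hom_ext {M : Type*} [AddCommGroup M] [Module R M] {f f' : IndCoinv →ₗ[R] M}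
    (h : ∀ b g t, f (Coinv.mk (Ind.mk b (Pi.single g 1)) t) =
      f' (Coinv.mk (Ind.mk b (Pi.single g 1)) t)) : f = f' :=
  Coinv.hom_ext fun x t => LinearMap.congr_fun
    (Ind.hom_ext (f := f ∘ₗ Coinv.mk.flip t) (f' := f' ∘ₗ Coinv.mk.flip t) (h · · t)) x

noncomputable def indToResMk : B →ₗ[R] (Equiv.Perm (Fin (n + 1)) → R) →ₗ[R] T →ₗ[R] Res :=
  LinearMap.mk₂ R (fun b φ => ∑ g, φ g • (Coinv.mk b ∘ₗ π g))
    (fun b b' φ => by simp [LinearMap.add_comp, Finset.sum_add_distrib])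
    (fun r b φ => by simp [LinearMap.smul_comp, Finset.smul_sum, smul_comm r])
    (fun b φ φ' => by simp [add_smul, Finset.sum_add_distrib])
    (fun r b φ => by simp [Finset.smul_sum, smul_smul])

theorem indToResMk_single (b : B) (g : Equiv.Perm (Fin (n + 1))) :
    indToResMk ρ π b (Pi.single g 1) = Coinv.mk b ∘ₗ π g := by
  simp [indToResMk]

noncomputable def resToIndCoinv : Res →ₗ[R] IndCoinv :=
  Coinv.lift (Coinv.mk ∘ₗ Ind.mk.flip (Pi.single 1 1)) fun h b t => by
    simp only [LinearMap.comp_apply, LinearMap.flip_apply]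
    rw [Ind.mk_act, mul_one, ← Coinv.mk_act, Ind.indAct_mk_single, one_mul]

variable {π} (hmul : ∀ g h, π (g * h) = π g ∘ₗ π h)
include hmul

noncomputable def indToRes : Ind R n B ρ →ₗ[R] T →ₗ[R] Res :=
  Ind.lift (indToResMk ρ π) fun h b g => by
    rw [indToResMk_single, indToResMk_single, Coinv.mk_comp_act, hmul, LinearMap.comp_assoc]

theorem indToRes_mk_single (b : B) (g : Equiv.Perm (Fin (n + 1))) :
    indToRes ρ hmul (Ind.mk b (Pi.single g 1)) = Coinv.mk b ∘ₗ π g := by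
  rw [indToRes, Ind.lift_mk, indToResMk_single]

theorem indToRes_indAct (g₀ : Equiv.Perm (Fin (n + 1))) (x : Ind R n B ρ) (t : T) :
    indToRes ρ hmul (indAct R n B ρ g₀ x) t = indToRes ρ hmul x (π g₀ t) :=
  LinearMap.congr_fun (Ind.hom_ext (f := (indToRes ρ hmul).flip t ∘ₗ indAct R n B ρ g₀)
    (f' := (indToRes ρ hmul).flip (π g₀ t))
    (fun b g => by simp [Ind.indAct_mk_single, indToRes_mk_single, hmul])) x

noncomputable def indCoinvToRes : IndCoinv →ₗ[R] Res :=
  Coinv.lift (indToRes ρ hmul) (indToRes_indAct ρ hmul)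

noncomputable def indCoinvEquiv (hone : π 1 = LinearMap.id) : IndCoinv ≃ₗ[R] Res :=
  LinearEquiv.ofLinearMap (indCoinvToRes ρ hmul) (resToIndCoinv ρ π)
    (Coinv.hom_ext fun b t => by
      simp [indCoinvToRes, resToIndCoinv, indToRes_mk_single, hone])
    (indCoinv_hom_ext fun b g t => by
      simp only [indCoinvToRes, resToIndCoinv, LinearMap.comp_apply, Coinv.lift_mk,
        indToRes_mk_single, LinearMap.flip_apply, LinearMap.id_apply]
      rw [← Coinv.mk_act, Ind.indAct_mk_single, one_mul])

end InducedCoinv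

namespace Coinv

variable {R} {G : Type*} {B : Type u} [AddCommGroup B] [Module R B] (ρ : G → B →ₗ[R] B)
variable {T T₀ : Type u} [AddCommGroup T] [Module R T] [AddCommGroup T₀] [Module R T₀]
variable {π : G → T →ₗ[R] T} {π₀ : G → T₀ →ₗ[R] T₀} {V : Type*} [AddCommGroup V] [Module R V]
variable (e : T ≃ₗ[R] T₀ ⊗[R] V) (he : ∀ g, e.toLinearMap ∘ₗ π g = (π₀ g).rTensor V ∘ₗ e)
include he

theorem symm_comp_rTensor (g : G) :
    e.symm.toLinearMap ∘ₗ (π₀ g).rTensor V = π g ∘ₗ e.symm.toLinearMap :=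
  LinearMap.ext fun x => e.injective <| by
    simpa using (LinearMap.congr_fun (he g) (e.symm x)).symm

noncomputable def toTensor : Coinv R G B ρ T π →ₗ[R] Coinv R G B ρ T₀ π₀ ⊗[R] V :=
  lift (LinearMap.lcomp R _ e.toLinearMap ∘ₗ LinearMap.rTensorHom V ∘ₗ mk) fun g b t => by
    change (mk (ρ g b)).rTensor V (e t) = (mk b).rTensor V (e (π g t))
    rw [← LinearEquiv.coe_coe, ← LinearMap.comp_apply _ (π g), he, mk_comp_act,
      LinearMap.rTensor_comp]
    rfl

noncomputable def ofTensor : Coinv R G B ρ T₀ π₀ ⊗[R] V →ₗ[R] Coinv R G B ρ T π :=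
  TensorProduct.lift <| lift (TensorProduct.lcurry (.id R) T₀ V _ ∘ₗ
    LinearMap.lcomp R _ e.symm.toLinearMap ∘ₗ mk) fun g b t => by
      ext v
      simp only [LinearMap.comp_apply, LinearMap.lcomp_apply, TensorProduct.lcurry_apply]
      rw [mk_act, ← LinearMap.comp_apply (π g), ← symm_comp_rTensor e he]
      rfl

noncomputable def equivTensorOfEquivariant :
    Coinv R G B ρ T π ≃ₗ[R] Coinv R G B ρ T₀ π₀ ⊗[R] V :=
  LinearEquiv.ofLinearMap (toTensor ρ e he) (ofTensor ρ e he)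
    (tensor_hom_ext fun b t v => by simp [toTensor, ofTensor])
    (hom_ext fun b t => by
      have h : ofTensor ρ e he ∘ₗ (mk b).rTensor V = mk b ∘ₗ e.symm.toLinearMap :=
        TensorProduct.ext' fun t₀ v => by simp [ofTensor]
      simpa [toTensor] using LinearMap.congr_fun h (e t))

end Coinv

section TensorPower

variable {R} (V : Type u) [AddCommGroup V] [Module R V] (n : ℕ)

theorem permAct_one : permAct R V n 1 = LinearMap.id := by
  rw [permAct, Equiv.Perm.one_def, PiTensorProduct.reindex_refl]
  rfl

theorem permAct_mul (g h : Equiv.Perm (Fin n)) :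
    permAct R V n (g * h) = permAct R V n g ∘ₗ permAct R V n h := by
  rw [permAct, Equiv.Perm.mul_def, ← PiTensorProduct.reindex_trans]
  rfl

theorem embHom_symm_castAdd (h : Equiv.Perm (Fin n)) (i : Fin n) :
    (embHom n h).symm (Fin.castAdd 1 i) = Fin.castAdd 1 (h.symm i) := by
  simp [Equiv.symm_apply_eq, embHom]

theorem embHom_symm_last (h : Equiv.Perm (Fin n)) :
    (embHom n h).symm (Fin.last n) = Fin.last n := by
  simp only [Equiv.symm_apply_eq, embHom, MonoidHom.coe_mk, OneHom.coe_mk,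
    Equiv.permCongr_apply, finSumFinEquiv_symm_last, Equiv.sumCongr_apply, Sum.map_inr,
    finSumFinEquiv_apply_right]
  rfl

variable (R) in
noncomputable def piTensorSuccEquiv :
    (⨂[R] _ : Fin (n + 1), V) ≃ₗ[R] (⨂[R] _ : Fin n, V) ⊗[R] V :=
  PiTensorProduct.reindex R (fun _ => V) finSumFinEquiv.symm ≪≫ₗ
    (PiTensorProduct.tmulEquiv R V).symm ≪≫ₗ
    TensorProduct.congr (LinearEquiv.refl R _) (PiTensorProduct.subsingletonEquiv 0)

variable {V n}

theorem piTensorSuccEquiv_tprod (f : Fin (n + 1) → V) :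
    piTensorSuccEquiv R V n (tprod R f) =
      (⨂ₜ[R] i : Fin n, f (Fin.castAdd 1 i)) ⊗ₜ f (Fin.last n) := by
  simp only [piTensorSuccEquiv, LinearEquiv.trans_apply, PiTensorProduct.reindex_tprod,
    Equiv.symm_symm, PiTensorProduct.tmulEquiv_symm_apply, finSumFinEquiv_apply_left,
    finSumFinEquiv_apply_right, TensorProduct.congr_tmul, LinearEquiv.refl_apply,
    PiTensorProduct.subsingletonEquiv_apply_tprod]
  rfl

theorem piTensorSuccEquiv_comp_permAct_embHom (h : Equiv.Perm (Fin n)) :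
    (piTensorSuccEquiv R V n).toLinearMap ∘ₗ permAct R V (n + 1) (embHom n h) =
      (permAct R V n h).rTensor V ∘ₗ piTensorSuccEquiv R V n := by
  ext f
  simp only [LinearMap.compMultilinearMap_apply, LinearMap.comp_apply, permAct,
    LinearEquiv.coe_coe, PiTensorProduct.reindex_tprod, piTensorSuccEquiv_tprod,
    LinearMap.rTensor_tmul]
  rw [embHom_symm_last]
  congr 2
  funext i
  rw [embHom_symm_castAdd]

end TensorPower

namespace DirectSum

variable {R} {M N : ℕ → Type*} [∀ k, AddCommMonoid (M k)] [∀ k, Module R (M k)]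
variable [∀ n, AddCommMonoid (N n)] [∀ n, Module R (N n)]

noncomputable def lequivOfSucc [Subsingleton (M 0)] (e : ∀ n, M (n + 1) ≃ₗ[R] N n) :
    (⨁ k, M k) ≃ₗ[R] ⨁ n, N n :=
  LinearEquiv.ofLinearMap
    (toModule R ℕ _ fun | 0 => 0 | n + 1 => lof R ℕ N n ∘ₗ (e n).toLinearMap)
    (toModule R ℕ _ fun n => lof R ℕ M (n + 1) ∘ₗ (e n).symm.toLinearMap)
    (linearMap_ext R fun n => LinearMap.ext fun x => by simp)
    (linearMap_ext R fun
      | 0 => LinearMap.ext fun x => by simp [Subsingleton.elim x 0]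
      | n + 1 => LinearMap.ext fun x => by simp)

end DirectSum

instance sigmaM.instSubsingletonZero (Mn : ℕ → Type u) [∀ n, AddCommGroup (Mn n)]
    [∀ n, Module R (Mn n)] (act : ∀ n, Equiv.Perm (Fin n) → Mn n →ₗ[R] Mn n) :
    Subsingleton (sigmaM R Mn act 0) :=
  inferInstanceAs (Subsingleton (⊥ : Submodule R R))

noncomputable def indCoinvTensorPowEquiv {n : ℕ} {B : Type u} [AddCommGroup B] [Module R B]
    (ρ : Equiv.Perm (Fin n) → B →ₗ[R] B) (V : Type u) [AddCommGroup V] [Module R V] :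
    Coinv R (Equiv.Perm (Fin (n + 1))) (Ind R n B ρ) (indAct R n B ρ)
        (⨂[R] _ : Fin (n + 1), V) (permAct R V (n + 1)) ≃ₗ[R]
      Coinv R (Equiv.Perm (Fin n)) B ρ (⨂[R] _ : Fin n, V) (permAct R V n) ⊗[R] V :=
  indCoinvEquiv ρ (permAct_mul V (n + 1)) (permAct_one V (n + 1)) ≪≫ₗ
    Coinv.equivTensorOfEquivariant ρ (piTensorSuccEquiv R V n)
      piTensorSuccEquiv_comp_permAct_embHom

theorem stmt12 (Mn : ℕ → Type u) [∀ n, AddCommGroup (Mn n)] [∀ n, Module R (Mn n)]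
    (act : ∀ n, Equiv.Perm (Fin n) → Mn n →ₗ[R] Mn n)
    (V : Type u) [AddCommGroup V] [Module R V] :
    Nonempty ((Schur R (sigmaM R Mn act) (sigmaAct R Mn act) V) ≃ₗ[R]
      ((Schur R Mn act V) ⊗[R] V)) :=
  ⟨DirectSum.lequivOfSucc (fun n => indCoinvTensorPowEquiv R (act n) V) ≪≫ₗ
    (TensorProduct.directSumLeft R R _ V).symm⟩
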